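/- Let α, β ∈ (0,π) and φ, ξ ∈ [0,2π), define u₀ = C_α|0⟩ + e^{iφ}S_α|1⟩, u₁ = −S_α|0⟩ + e^{iφ}C_α|1⟩, v₀ = C_β|0⟩ + e^{iξ}S_β|1⟩, v₁ = −S_β|0⟩ + e^{iξ}C_β|1⟩ in ℂ², and the unit vector ψ_Hardy := (T_α·u₀⊗v₁ + T_β·u₁⊗v₀ + u₁⊗v₁)/√(1+T_α²+T_β²) in ℂ²⊗ℂ². Set r := 1 − S_α²S_β² and s := C_α²/r. Let Alice's measurement A₀ have outcome vectors (|0⟩ for +, |1⟩ for −), A₁ have (u₀ for +, u₁ for −), Bob's B₀ have (|0⟩ for +, |1⟩ for −), and B₁ have (v₀ for +, v₁ for −), with outcome probabilities p(a,b|x,y) = |⟨e_a ⊗ f_b, ψ_Hardy⟩|² where e_a, f_b are the corresponding outcome vectors. Then the sixteen probabilities equal: p(+,+|A₀B₀)=(1−r)r(1−s)s/(1−rs), p(+,−|A₀B₀)=(1−r)²s/(1−rs), p(−,+|A₀B₀)=(1−r)(1−s), p(−,−|A₀B₀)=r; p(+,+|A₀B₁)=(1−r)s, p(+,−|A₀B₁)=0,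 p(−,+|A₀B₁)=(1−r)rs²/(1−rs), p(−,−|A₀B₁)=(1−s)/(1−rs); p(+,+|A₁B₀)=(1−r)(1−s)/(1−rs), p(+,−|A₁B₀)=r(1−s)²/(1−rs), p(−,+|A₁B₀)=0, p(−,−|A₁B₀)=s; p(+,+|A₁B₁)=0, p(+,−|A₁B₁)=1−s, p(−,+|A₁B₁)=(1−r)s/(1−rs), p(−,−|A₁B₁)=r(1−s)s/(1−rs). -/

import Mathlib

open Real Complex

noncomputable section

/-- Computational basis vector `|0⟩` of a qubit. -/
def ket0 : EuclideanSpace ℂ (Fin 2) := WithLp.toLp 2 (fun i => if i = 0 then 1 else 0)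

/-- Computational basis vector `|1⟩` of a qubit. -/
def ket1 : EuclideanSpace ℂ (Fin 2) := WithLp.toLp 2 (fun i => if i = 1 then 1 else 0)

/-- Tensor product of two qubit vectors, as a vector in `ℂ²⊗ℂ² ≅ ℂ⁴`. -/
def tensor (u v : EuclideanSpace ℂ (Fin 2)) : EuclideanSpace ℂ (Fin 2 × Fin 2) :=
  WithLp.toLp 2 (fun p => u p.1 * v p.2)

/-- Born-rule probability of outcome vectors `e`, `f` on the state `ψ`. -/
def bornProb (e f : EuclideanSpace ℂ (Fin 2)) (ψ : EuclideanSpace ℂ (Fin 2 × Fin 2)) : ℝ :=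
  ‖(inner ℂ (tensor e f) ψ : ℂ)‖ ^ 2

/-!
Expand every outcome vector in the orthonormal bases `(u₀, u₁)` and `(v₀, v₁)`: up to a phase,
its two coefficients are proportional to `(1, -T)`, `(T, 1)`, `(1, 0)` or `(0, 1)`, with squared
proportionality factor `(1 + T²)⁻¹ = C²`. Since `ψ` is proportional to
`T_α u₀⊗v₁ + T_β u₁⊗v₀ + u₁⊗v₁`, every probability is a rational function of `T_α` and `T_β`,
and so are `r = (1 + T_α² + T_β²) / ((1 + T_α²)(1 + T_β²))` and `s = (1 + T_β²) / (1 + T_α² + T_β²)`.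
The table is then a list of identities between rational functions.
-/

theorem inner_tensor_tensor (a b c d : EuclideanSpace ℂ (Fin 2)) :
    inner ℂ (tensor a b) (tensor c d) = inner ℂ a c * inner ℂ b d := by
  simp only [PiLp.inner_apply, RCLike.inner_apply, tensor, Fintype.sum_prod_type,
    Fin.sum_univ_two, map_mul]
  ring

theorem inner_fin_two (x y : EuclideanSpace ℂ (Fin 2)) :
    inner ℂ x y = starRingEnd ℂ (x 0) * y 0 + starRingEnd ℂ (x 1) * y 1 := by
  simp [PiLp.inner_apply, Fin.sum_univ_two, mul_comm]

theorem inner_ket0_left (x : EuclideanSpace ℂ (Fin 2)) : inner ℂ ket0 x = x 0 := by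
  simp [inner_fin_two, ket0]

theorem inner_ket1_left (x : EuclideanSpace ℂ (Fin 2)) : inner ℂ ket1 x = x 1 := by
  simp [inner_fin_two, ket1]

theorem exp_I_mul_conj_mul_self (φ : ℝ) :
    starRingEnd ℂ (Complex.exp (Complex.I * φ)) * Complex.exp (Complex.I * φ) = 1 := by
  rw [← Complex.exp_conj, ← Complex.exp_add, map_mul, Complex.conj_I, Complex.conj_ofReal,
    neg_mul, neg_add_cancel, Complex.exp_zero]

def ProportionalOverlaps (e u₀ u₁ : EuclideanSpace ℂ (Fin 2)) (w x₀ x₁ : ℝ) : Prop :=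
  ∃ p : ℂ, ‖p‖ ^ 2 = w ∧ inner ℂ e u₀ = p * x₀ ∧ inner ℂ e u₁ = p * x₁

theorem bornProb_smul_hardy_form {u₀ u₁ v₀ v₁ e f : EuclideanSpace ℂ (Fin 2)}
    {w x₀ x₁ w' y₀ y₁ : ℝ} (he : ProportionalOverlaps e u₀ u₁ w x₀ x₁)
    (hf : ProportionalOverlaps f v₀ v₁ w' y₀ y₁) (N a b : ℝ) :
    bornProb e f ((N : ℂ)⁻¹ • ((a : ℂ) • tensor u₀ v₁ + (b : ℂ) • tensor u₁ v₀ + tensor u₁ v₁)) =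
      w * w' * (a * x₀ * y₁ + b * x₁ * y₀ + x₁ * y₁) ^ 2 / N ^ 2 := by
  obtain ⟨p, rfl, he₀, he₁⟩ := he
  obtain ⟨q, rfl, hf₀, hf₁⟩ := hf
  have amplitude : inner ℂ (tensor e f)
      ((N : ℂ)⁻¹ • ((a : ℂ) • tensor u₀ v₁ + (b : ℂ) • tensor u₁ v₀ + tensor u₁ v₁)) =
      p * q * ((a * x₀ * y₁ + b * x₁ * y₀ + x₁ * y₁) / N : ℝ) := by
    simp only [inner_smul_right, inner_add_right, inner_tensor_tensor, he₀, he₁, hf₀, hf₁]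
    push_cast
    ring
  rw [bornProb, amplitude, norm_mul, norm_mul, Complex.norm_real, Real.norm_eq_abs, mul_pow,
    mul_pow, sq_abs, div_pow]
  ring

def blochKet0 (θ φ : ℝ) : EuclideanSpace ℂ (Fin 2) :=
  (Real.cos (θ / 2) : ℂ) • ket0 + (Complex.exp (Complex.I * φ) * Real.sin (θ / 2)) • ket1

def blochKet1 (θ φ : ℝ) : EuclideanSpace ℂ (Fin 2) :=
  (-(Real.sin (θ / 2) : ℂ)) • ket0 + (Complex.exp (Complex.I * φ) * Real.cos (θ / 2)) • ket1

section Bloch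

variable (θ φ : ℝ)

@[simp] theorem blochKet0_apply_zero : blochKet0 θ φ 0 = Real.cos (θ / 2) := by
  simp [blochKet0, ket0, ket1]

@[simp] theorem blochKet0_apply_one :
    blochKet0 θ φ 1 = Complex.exp (Complex.I * φ) * Real.sin (θ / 2) := by
  simp [blochKet0, ket0, ket1]

@[simp] theorem blochKet1_apply_zero : blochKet1 θ φ 0 = -Real.sin (θ / 2) := by
  simp [blochKet1, ket0, ket1]

@[simp] theorem blochKet1_apply_one :
    blochKet1 θ φ 1 = Complex.exp (Complex.I * φ) * Real.cos (θ / 2) := by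
  simp [blochKet1, ket0, ket1]

theorem ofReal_cos_sq_add_sin_sq_half :
    (Real.cos (θ / 2) : ℂ) ^ 2 + (Real.sin (θ / 2) : ℂ) ^ 2 = 1 := by
  exact_mod_cast Real.cos_sq_add_sin_sq (θ / 2)

theorem inner_blochKet0_self : inner ℂ (blochKet0 θ φ) (blochKet0 θ φ) = 1 := by
  simp only [inner_fin_two, blochKet0_apply_zero, blochKet0_apply_one, map_mul,
    Complex.conj_ofReal]
  linear_combination (Real.sin (θ / 2) : ℂ) ^ 2 * exp_I_mul_conj_mul_self φ +
    ofReal_cos_sq_add_sin_sq_half θ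

theorem inner_blochKet1_self : inner ℂ (blochKet1 θ φ) (blochKet1 θ φ) = 1 := by
  simp only [inner_fin_two, blochKet1_apply_zero, blochKet1_apply_one, map_mul, map_neg,
    Complex.conj_ofReal]
  linear_combination (Real.cos (θ / 2) : ℂ) ^ 2 * exp_I_mul_conj_mul_self φ +
    ofReal_cos_sq_add_sin_sq_half θ

theorem inner_blochKet0_blochKet1 : inner ℂ (blochKet0 θ φ) (blochKet1 θ φ) = 0 := by
  simp only [inner_fin_two, blochKet0_apply_zero, blochKet0_apply_one, blochKet1_apply_zero,
    blochKet1_apply_one, map_mul, Complex.conj_ofReal]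
  linear_combination (Real.sin (θ / 2) : ℂ) * Real.cos (θ / 2) * exp_I_mul_conj_mul_self φ

theorem inner_blochKet1_blochKet0 : inner ℂ (blochKet1 θ φ) (blochKet0 θ φ) = 0 :=
  inner_eq_zero_symm.mp (inner_blochKet0_blochKet1 θ φ)

theorem proportionalOverlaps_ket0 (hθ : Real.cos (θ / 2) ≠ 0) :
    ProportionalOverlaps ket0 (blochKet0 θ φ) (blochKet1 θ φ) (1 + Real.tan (θ / 2) ^ 2)⁻¹ 1
      (-Real.tan (θ / 2)) := by
  refine ⟨Real.cos (θ / 2), ?_, ?_, ?_⟩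
  · rw [Complex.norm_real, Real.norm_eq_abs, sq_abs, Real.inv_one_add_tan_sq hθ]
  · simp [inner_ket0_left]
  · simp [inner_ket0_left, ← Real.tan_mul_cos hθ, mul_comm]

theorem proportionalOverlaps_ket1 (hθ : Real.cos (θ / 2) ≠ 0) :
    ProportionalOverlaps ket1 (blochKet0 θ φ) (blochKet1 θ φ) (1 + Real.tan (θ / 2) ^ 2)⁻¹
      (Real.tan (θ / 2)) 1 := by
  refine ⟨Complex.exp (Complex.I * φ) * Real.cos (θ / 2), ?_, ?_, ?_⟩
  · rw [norm_mul, Complex.norm_exp_I_mul_ofReal, one_mul, Complex.norm_real, Real.norm_eq_abs,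
      sq_abs, Real.inv_one_add_tan_sq hθ]
  · rw [inner_ket1_left, blochKet0_apply_one, ← Real.tan_mul_cos hθ]
    push_cast
    ring
  · simp [inner_ket1_left]

theorem proportionalOverlaps_blochKet0 :
    ProportionalOverlaps (blochKet0 θ φ) (blochKet0 θ φ) (blochKet1 θ φ) 1 1 0 :=
  ⟨1, by simp, by rw [inner_blochKet0_self, Complex.ofReal_one, mul_one],
    by simp [inner_blochKet0_blochKet1]⟩

theorem proportionalOverlaps_blochKet1 :
    ProportionalOverlaps (blochKet1 θ φ) (blochKet0 θ φ) (blochKet1 θ φ) 1 0 1 :=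
  ⟨1, by simp, by simp [inner_blochKet1_blochKet0],
    by rw [inner_blochKet1_self, Complex.ofReal_one, mul_one]⟩

end Bloch

def hardyState (α β φ ξ : ℝ) : EuclideanSpace ℂ (Fin 2 × Fin 2) :=
  ((Real.sqrt (1 + Real.tan (α / 2) ^ 2 + Real.tan (β / 2) ^ 2) : ℂ))⁻¹ •
    ((Real.tan (α / 2) : ℂ) • tensor (blochKet0 α φ) (blochKet1 β ξ) +
      (Real.tan (β / 2) : ℂ) • tensor (blochKet1 α φ) (blochKet0 β ξ) +
      tensor (blochKet1 α φ) (blochKet1 β ξ))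

theorem bornProb_hardyState {α β φ ξ : ℝ} {e f : EuclideanSpace ℂ (Fin 2)} {w x₀ x₁ w' y₀ y₁ : ℝ}
    (he : ProportionalOverlaps e (blochKet0 α φ) (blochKet1 α φ) w x₀ x₁)
    (hf : ProportionalOverlaps f (blochKet0 β ξ) (blochKet1 β ξ) w' y₀ y₁) :
    bornProb e f (hardyState α β φ ξ) =
      w * w' * (Real.tan (α / 2) * x₀ * y₁ + Real.tan (β / 2) * x₁ * y₀ + x₁ * y₁) ^ 2 /
        (1 + Real.tan (α / 2) ^ 2 + Real.tan (β / 2) ^ 2) := by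
  rw [hardyState, bornProb_smul_hardy_form he hf, Real.sq_sqrt (by positivity)]

theorem one_sub_sin_sq_mul_sin_sq {x y : ℝ} (hx : Real.cos x ≠ 0) (hy : Real.cos y ≠ 0) :
    1 - Real.sin x ^ 2 * Real.sin y ^ 2 =
      (1 + Real.tan x ^ 2 + Real.tan y ^ 2) / ((1 + Real.tan x ^ 2) * (1 + Real.tan y ^ 2)) := by
  rw [← Real.tan_sq_div_one_add_tan_sq hx, ← Real.tan_sq_div_one_add_tan_sq hy]
  field_simp
  ring

theorem cos_sq_div_one_sub_sin_sq_mul_sin_sq {x y : ℝ} (hx : Real.cos x ≠ 0)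
    (hy : Real.cos y ≠ 0) :
    Real.cos x ^ 2 / (1 - Real.sin x ^ 2 * Real.sin y ^ 2) =
      (1 + Real.tan y ^ 2) / (1 + Real.tan x ^ 2 + Real.tan y ^ 2) := by
  rw [one_sub_sin_sq_mul_sin_sq hx hy, ← Real.inv_one_add_tan_sq hx]
  field_simp

theorem cos_half_pos {α : ℝ} (hα : α ∈ Set.Ioo 0 π) : 0 < Real.cos (α / 2) :=
  Real.cos_pos_of_mem_Ioo ⟨by linarith [hα.1, Real.pi_pos], by linarith [hα.2]⟩

theorem tan_half_pos {α : ℝ} (hα : α ∈ Set.Ioo 0 π) : 0 < Real.tan (α / 2) :=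
  Real.tan_pos_of_pos_of_lt_pi_div_two (by linarith [hα.1]) (by linarith [hα.2])

theorem hardy_behavior_probability_table_general
    (α β φ ξ : ℝ) (hα : α ∈ Set.Ioo 0 π) (hβ : β ∈ Set.Ioo 0 π)
    (u0 u1 v0 v1 : EuclideanSpace ℂ (Fin 2))
    (hu0 : u0 = (Real.cos (α / 2) : ℂ) • ket0 + (Complex.exp (Complex.I * φ) * Real.sin (α / 2)) • ket1)
    (hu1 : u1 = (-(Real.sin (α / 2) : ℂ)) • ket0 + (Complex.exp (Complex.I * φ) * Real.cos (α / 2)) • ket1)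
    (hv0 : v0 = (Real.cos (β / 2) : ℂ) • ket0 + (Complex.exp (Complex.I * ξ) * Real.sin (β / 2)) • ket1)
    (hv1 : v1 = (-(Real.sin (β / 2) : ℂ)) • ket0 + (Complex.exp (Complex.I * ξ) * Real.cos (β / 2)) • ket1)
    (ψ : EuclideanSpace ℂ (Fin 2 × Fin 2))
    (hψ : ψ = ((Real.sqrt (1 + Real.tan (α / 2) ^ 2 + Real.tan (β / 2) ^ 2) : ℂ))⁻¹ •
        ((Real.tan (α / 2) : ℂ) • tensor u0 v1 + (Real.tan (β / 2) : ℂ) • tensor u1 v0 +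
          tensor u1 v1))
    (r s : ℝ)
    (hr : r = 1 - Real.sin (α / 2) ^ 2 * Real.sin (β / 2) ^ 2)
    (hs : s = Real.cos (α / 2) ^ 2 / r) :
    -- setting pair (A₀, B₀)
    bornProb ket0 ket0 ψ = (1 - r) * r * (1 - s) * s / (1 - r * s) ∧
    bornProb ket0 ket1 ψ = (1 - r) ^ 2 * s / (1 - r * s) ∧
    bornProb ket1 ket0 ψ = (1 - r) * (1 - s) ∧
    bornProb ket1 ket1 ψ = r ∧
    -- setting pair (A₀, B₁)
    bornProb ket0 v0 ψ = (1 - r) * s ∧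
    bornProb ket0 v1 ψ = 0 ∧
    bornProb ket1 v0 ψ = (1 - r) * r * s ^ 2 / (1 - r * s) ∧
    bornProb ket1 v1 ψ = (1 - s) / (1 - r * s) ∧
    -- setting pair (A₁, B₀)
    bornProb u0 ket0 ψ = (1 - r) * (1 - s) / (1 - r * s) ∧
    bornProb u0 ket1 ψ = r * (1 - s) ^ 2 / (1 - r * s) ∧
    bornProb u1 ket0 ψ = 0 ∧
    bornProb u1 ket1 ψ = s ∧
    -- setting pair (A₁, B₁)
    bornProb u0 v0 ψ = 0 ∧
    bornProb u0 v1 ψ = 1 - s ∧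
    bornProb u1 v0 ψ = (1 - r) * s / (1 - r * s) ∧
    bornProb u1 v1 ψ = r * (1 - s) * s / (1 - r * s) := by
  have hCα := (cos_half_pos hα).ne'
  have hCβ := (cos_half_pos hβ).ne'
  have hTα := (tan_half_pos hα).ne'
  obtain rfl : u0 = blochKet0 α φ := hu0
  obtain rfl : u1 = blochKet1 α φ := hu1
  obtain rfl : v0 = blochKet0 β ξ := hv0
  obtain rfl : v1 = blochKet1 β ξ := hv1
  obtain rfl : ψ = hardyState α β φ ξ := hψ
  subst hr hs
  rw [cos_sq_div_one_sub_sin_sq_mul_sin_sq hCα hCβ, one_sub_sin_sq_mul_sin_sq hCα hCβ]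
  have k0α := proportionalOverlaps_ket0 α φ hCα
  have k1α := proportionalOverlaps_ket1 α φ hCα
  have u0α := proportionalOverlaps_blochKet0 α φ
  have u1α := proportionalOverlaps_blochKet1 α φ
  have k0β := proportionalOverlaps_ket0 β ξ hCβ
  have k1β := proportionalOverlaps_ket1 β ξ hCβ
  have v0β := proportionalOverlaps_blochKet0 β ξ
  have v1β := proportionalOverlaps_blochKet1 β ξ
  refine ⟨(bornProb_hardyState k0α k0β).trans ?_, (bornProb_hardyState k0α k1β).trans ?_,
    (bornProb_hardyState k1α k0β).trans ?_, (bornProb_hardyState k1α k1β).trans ?_,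
    (bornProb_hardyState k0α v0β).trans ?_, (bornProb_hardyState k0α v1β).trans ?_,
    (bornProb_hardyState k1α v0β).trans ?_, (bornProb_hardyState k1α v1β).trans ?_,
    (bornProb_hardyState u0α k0β).trans ?_, (bornProb_hardyState u0α k1β).trans ?_,
    (bornProb_hardyState u1α k0β).trans ?_, (bornProb_hardyState u1α k1β).trans ?_,
    (bornProb_hardyState u0α v0β).trans ?_, (bornProb_hardyState u0α v1β).trans ?_,
    (bornProb_hardyState u1α v0β).trans ?_, (bornProb_hardyState u1α v1β).trans ?_⟩
  all_goals
    field_simp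
    ring

theorem hardy_behavior_probability_table
    (α β φ ξ : ℝ) (hα : α ∈ Set.Ioo 0 π) (hβ : β ∈ Set.Ioo 0 π)
    (hφ : φ ∈ Set.Ico 0 (2 * π)) (hξ : ξ ∈ Set.Ico 0 (2 * π))
    (u0 u1 v0 v1 : EuclideanSpace ℂ (Fin 2))
    (hu0 : u0 = (Real.cos (α / 2) : ℂ) • ket0 + (Complex.exp (Complex.I * φ) * Real.sin (α / 2)) • ket1)
    (hu1 : u1 = (-(Real.sin (α / 2) : ℂ)) • ket0 + (Complex.exp (Complex.I * φ) * Real.cos (α / 2)) • ket1)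
    (hv0 : v0 = (Real.cos (β / 2) : ℂ) • ket0 + (Complex.exp (Complex.I * ξ) * Real.sin (β / 2)) • ket1)
    (hv1 : v1 = (-(Real.sin (β / 2) : ℂ)) • ket0 + (Complex.exp (Complex.I * ξ) * Real.cos (β / 2)) • ket1)
    (ψ : EuclideanSpace ℂ (Fin 2 × Fin 2))
    (hψ : ψ = ((Real.sqrt (1 + Real.tan (α / 2) ^ 2 + Real.tan (β / 2) ^ 2) : ℂ))⁻¹ •
        ((Real.tan (α / 2) : ℂ) • tensor u0 v1 + (Real.tan (β / 2) : ℂ) • tensor u1 v0 +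
          tensor u1 v1))
    (r s : ℝ)
    (hr : r = 1 - Real.sin (α / 2) ^ 2 * Real.sin (β / 2) ^ 2)
    (hs : s = Real.cos (α / 2) ^ 2 / r) :
    -- setting pair (A₀, B₀)
    bornProb ket0 ket0 ψ = (1 - r) * r * (1 - s) * s / (1 - r * s) ∧
    bornProb ket0 ket1 ψ = (1 - r) ^ 2 * s / (1 - r * s) ∧
    bornProb ket1 ket0 ψ = (1 - r) * (1 - s) ∧
    bornProb ket1 ket1 ψ = r ∧
    -- setting pair (A₀, B₁)
    bornProb ket0 v0 ψ = (1 - r) * s ∧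
    bornProb ket0 v1 ψ = 0 ∧
    bornProb ket1 v0 ψ = (1 - r) * r * s ^ 2 / (1 - r * s) ∧
    bornProb ket1 v1 ψ = (1 - s) / (1 - r * s) ∧
    -- setting pair (A₁, B₀)
    bornProb u0 ket0 ψ = (1 - r) * (1 - s) / (1 - r * s) ∧
    bornProb u0 ket1 ψ = r * (1 - s) ^ 2 / (1 - r * s) ∧
    bornProb u1 ket0 ψ = 0 ∧
    bornProb u1 ket1 ψ = s ∧
    -- setting pair (A₁, B₁)
    bornProb u0 v0 ψ = 0 ∧
    bornProb u0 v1 ψ = 1 - s ∧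
    bornProb u1 v0 ψ = (1 - r) * s / (1 - r * s) ∧
    bornProb u1 v1 ψ = r * (1 - s) * s / (1 - r * s) :=
  hardy_behavior_probability_table_general α β φ ξ hα hβ u0 u1 v0 v1 hu0 hu1 hv0 hv1 ψ hψ r s hr hs

end
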